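/- For every integer T ≥ 1, setting a = ((2T+1)/(3T+1))·v_T − 1 with v_T = (T+1)·sin(2π/(3T+2))/sin(Tπ/(3T+2)), one has −1 < a < 2. -/

import Mathlib

/-!
Write `θ = Tπ/(3T+2)` and `s = sin θ`. Since `2π/(3T+2) = π - 3θ`, the triple-angle formula
gives `v_T = (T+1)(3 - 4s²)`. As `0 < θ < π/3`, `4s² < 3` and so `v_T > 0`, which is the
lower bound. For the upper bound, concavity of `sin` on `[0, π/3]` gives
`s ≥ (3T/(3T+2)) · √3/2`, hence `3 - 4s² ≤ 12(3T+1)/(3T+2)²` and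
`(2T+1)/(3T+1) · v_T ≤ 12(T+1)(2T+1)/(3T+2)² < 3`.
-/

open Real

noncomputable def v (x : ℝ) : ℝ :=
  (x + 1) * sin (2 * π / (3 * x + 2)) / sin (x * π / (3 * x + 2))

theorem mul_sin_le_sin_mul {a t : ℝ} (ha : 0 ≤ a) (ha' : a ≤ π) (ht : 0 ≤ t) (ht' : t ≤ 1) :
    t * sin a ≤ sin (t * a) := by
  simpa using strictConcaveOn_sin_Icc.concaveOn.2 ⟨le_rfl, pi_pos.le⟩ ⟨ha, ha'⟩
    (sub_nonneg.2 ht') ht (by ring)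

theorem four_mul_sin_sq_lt_three {θ : ℝ} (h₀ : 0 ≤ θ) (h : θ < π / 3) : 4 * sin θ ^ 2 < 3 := by
  have hlt : sin θ < √3 / 2 := by
    rw [← sin_pi_div_three]
    exact sin_lt_sin_of_lt_of_le_pi_div_two (by linarith [pi_pos]) (by linarith [pi_pos]) h
  have hnonneg : 0 ≤ sin θ := sin_nonneg_of_nonneg_of_le_pi h₀ (by linarith [pi_pos])
  nlinarith [sq_sqrt (show (0 : ℝ) ≤ 3 by norm_num)]

section

variable {x : ℝ}

theorem v_eq (hx : 0 < x) :
    v x = (x + 1) * (3 - 4 * sin (x * π / (3 * x + 2)) ^ 2) := by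
  set θ := x * π / (3 * x + 2) with hθ
  have hθ_pos : 0 < θ := by positivity
  have hθ_lt : θ < π := by
    rw [hθ, div_lt_iff₀ (by positivity)]; nlinarith [pi_pos]
  have hangle : 2 * π / (3 * x + 2) = π - 3 * θ := by
    rw [hθ]; field_simp; ring
  have hs : sin θ ≠ 0 := (sin_pos_of_pos_of_lt_pi hθ_pos hθ_lt).ne'
  rw [v, hangle, ← hθ, sin_pi_sub, sin_three_mul]
  field_simp

theorem v_pos (hx : 0 < x) : 0 < v x := by
  have hθ : x * π / (3 * x + 2) < π / 3 := by
    rw [div_lt_div_iff₀ (by positivity) three_pos]; nlinarith [pi_pos]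
  rw [v_eq hx]
  have := four_mul_sin_sq_lt_three (by positivity) hθ
  have : 0 < x + 1 := by linarith
  nlinarith

theorem v_le (hx : 0 < x) : v x ≤ 12 * (x + 1) * (3 * x + 1) / (3 * x + 2) ^ 2 := by
  set t := 3 * x / (3 * x + 2) with ht
  have hden : 0 < 3 * x + 2 := by linarith
  have ht1 : t ≤ 1 := by rw [ht, div_le_one hden]; linarith
  have hθ : x * π / (3 * x + 2) = t * (π / 3) := by rw [ht]; field_simp
  have hchord : t * (√3 / 2) ≤ sin (t * (π / 3)) := by
    rw [← sin_pi_div_three]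
    exact mul_sin_le_sin_mul (by positivity) (by linarith [pi_pos]) (by positivity) ht1
  have hsq : 3 * t ^ 2 ≤ 4 * sin (t * (π / 3)) ^ 2 := by
    have := pow_le_pow_left₀ (by positivity) hchord 2
    nlinarith [sq_sqrt (show (0 : ℝ) ≤ 3 by norm_num)]
  have h3t : 3 - 3 * t ^ 2 = 12 * (3 * x + 1) / (3 * x + 2) ^ 2 := by
    rw [ht]; field_simp; ring
  calc v x = (x + 1) * (3 - 4 * sin (t * (π / 3)) ^ 2) := by rw [v_eq hx, hθ]
    _ ≤ (x + 1) * (3 - 3 * t ^ 2) := by gcongr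
    _ = 12 * (x + 1) * (3 * x + 1) / (3 * x + 2) ^ 2 := by rw [h3t]; ring

theorem mul_v_lt_three (hx : 0 < x) : (2 * x + 1) / (3 * x + 1) * v x < 3 := by
  have h31 : 0 < 3 * x + 1 := by linarith
  calc (2 * x + 1) / (3 * x + 1) * v x
      ≤ (2 * x + 1) / (3 * x + 1) * (12 * (x + 1) * (3 * x + 1) / (3 * x + 2) ^ 2) :=
        mul_le_mul_of_nonneg_left (v_le hx) (by positivity)
    _ = 12 * (x + 1) * (2 * x + 1) / (3 * x + 2) ^ 2 := by field_simp
    _ < 3 := by rw [div_lt_iff₀ (by positivity)]; nlinarith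

end

theorem a_bounds (T : ℕ) (hT : 1 ≤ T) :
    -1 < (2 * (T : ℝ) + 1) / (3 * T + 1) *
        (((T : ℝ) + 1) * Real.sin (2 * π / (3 * T + 2)) / Real.sin (T * π / (3 * T + 2))) - 1 ∧
    (2 * (T : ℝ) + 1) / (3 * T + 1) *
        (((T : ℝ) + 1) * Real.sin (2 * π / (3 * T + 2)) / Real.sin (T * π / (3 * T + 2))) - 1 < 2 := by
  have hT₀ : (0 : ℝ) < T := by exact_mod_cast hT
  change -1 < _ * v T - 1 ∧ _ * v T - 1 < 2
  have hpos : 0 < (2 * (T : ℝ) + 1) / (3 * T + 1) * v T := by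
    have := v_pos hT₀
    positivity
  constructor <;> linarith [mul_v_lt_three hT₀]
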